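/- Let f = Xⁿ + a_{n−1}X^{n−1} + ⋯ + a₁X + a₀ ∈ ℍ[X] be monic with n ≥ 1. Then every r ∈ ℍ with f(r) = 0, and every r ∈ ℍ with f′(r) = 0, satisfies all of: ‖r‖ < √(1 + ‖a_{n−1}‖² + ⋯ + ‖a₀‖²); ‖r‖ < 1 + max_{0 ≤ k ≤ n−1} ‖aₖ‖; and ‖r‖ ≤ max{1, ‖a_{n−1}‖ + ⋯ + ‖a₀‖}. -/

import Mathlib

open Polynomial Finset

/-!
If `r` is a root of the monic polynomial `Xⁿ + ∑_{k<n} aₖ Xᵏ`, then `r ^ n = -∑_{k<n} aₖ rᵏ`, and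
the norm being multiplicative gives `‖r‖ⁿ ≤ ∑_{k<n} ‖aₖ‖ ‖r‖ᵏ`. If instead `f′(r) = 0`, the same
estimate for `f′`, whose leading coefficient is `n` and whose coefficients are `(k + 1) aₖ₊₁`,
yields `‖r‖ⁿ⁻¹ ≤ ∑_{k<n-1} ‖aₖ₊₁‖ ‖r‖ᵏ`; multiplying by `‖r‖` and adding `‖a₀‖` gives the same
inequality as for roots. The three bounds are then properties of a real `t ≥ 0` with
`tⁿ ≤ ∑_{k<n} cₖ tᵏ`: Cauchy–Schwarz against `∑ t²ᵏ`, comparison with the geometric sum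
`∑ tᵏ = (tⁿ - 1)/(t - 1)`, and `tᵏ⁺¹ ≤ tⁿ` for `t ≥ 1`.
-/

section CauchyBounds

variable {n : ℕ} {c : ℕ → ℝ} {t : ℝ}

theorem lt_sqrt_one_add_sum_sq_of_pow_le_sum (ht : 0 ≤ t)
    (h : t ^ n ≤ ∑ k ∈ range n, c k * t ^ k) :
    t < Real.sqrt (1 + ∑ k ∈ range n, c k ^ 2) := by
  rw [Real.lt_sqrt ht]
  by_contra! hle
  have hgeom := mul_geom_sum (t ^ 2) n
  have hsum_nonneg : 0 ≤ ∑ k ∈ range n, (t ^ 2) ^ k := sum_nonneg fun k _ => by positivity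
  refine lt_irrefl ((t ^ n) ^ 2) ?_
  calc (t ^ n) ^ 2
      ≤ (∑ k ∈ range n, c k * t ^ k) ^ 2 := pow_le_pow_left₀ (by positivity) h 2
    _ ≤ (∑ k ∈ range n, c k ^ 2) * ∑ k ∈ range n, (t ^ 2) ^ k := by
        simpa only [← pow_mul, mul_comm] using sum_mul_sq_le_sq_mul_sq (range n) c (t ^ ·)
    _ ≤ (t ^ 2 - 1) * ∑ k ∈ range n, (t ^ 2) ^ k := by gcongr; linarith
    _ < (t ^ n) ^ 2 := by rw [hgeom, ← pow_mul, mul_comm, pow_mul]; linarith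

theorem lt_one_add_of_pow_le_sum {M : ℝ} (ht : 0 ≤ t) (hM : ∀ k ∈ range n, c k ≤ M)
    (h : t ^ n ≤ ∑ k ∈ range n, c k * t ^ k) : t < 1 + M := by
  by_contra! hle
  have hcomp : ∑ k ∈ range n, c k * t ^ k ≤ (t - 1) * ∑ k ∈ range n, t ^ k := by
    rw [mul_sum]
    exact sum_le_sum fun k hk => by gcongr; linarith [hM k hk]
  linarith [mul_geom_sum t n]

theorem le_max_one_sum_of_pow_le_sum (ht : 0 ≤ t) (hc : ∀ k ∈ range n, 0 ≤ c k)
    (h : t ^ n ≤ ∑ k ∈ range n, c k * t ^ k) : t ≤ max 1 (∑ k ∈ range n, c k) := by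
  by_contra! hlt
  obtain ⟨h1, hS⟩ := max_lt_iff.mp hlt
  have hcomp : t * ∑ k ∈ range n, c k * t ^ k ≤ (∑ k ∈ range n, c k) * t ^ n := by
    rw [mul_sum, sum_mul]
    refine sum_le_sum fun k hk => ?_
    calc t * (c k * t ^ k) = c k * t ^ (k + 1) := by ring
      _ ≤ c k * t ^ n := by
          gcongr
          exacts [hc k hk, h1.le, mem_range.mp hk]
  linarith [mul_lt_mul_of_pos_right hS (pow_pos (by linarith : (0 : ℝ) < t) n),
    mul_le_mul_of_nonneg_left h ht]

end CauchyBounds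

namespace Polynomial

variable {R : Type*} [SeminormedRing R] [NormOneClass R] [NormMulClass R]

theorem norm_coeff_mul_norm_pow_le_of_eval_eq_zero {p : R[X]} {N : ℕ} (hN : p.natDegree ≤ N)
    {r : R} (h : p.eval r = 0) :
    ‖p.coeff N‖ * ‖r‖ ^ N ≤ ∑ k ∈ range N, ‖p.coeff k‖ * ‖r‖ ^ k := by
  rw [eval_eq_sum_range' (Nat.lt_succ_of_le hN), sum_range_succ, add_eq_zero_iff_neg_eq] at h
  calc ‖p.coeff N‖ * ‖r‖ ^ N = ‖p.coeff N * r ^ N‖ := by rw [norm_mul, norm_pow]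
    _ = ‖∑ k ∈ range N, p.coeff k * r ^ k‖ := by rw [← h, norm_neg]
    _ ≤ ∑ k ∈ range N, ‖p.coeff k * r ^ k‖ := norm_sum_le _ _
    _ = ∑ k ∈ range N, ‖p.coeff k‖ * ‖r‖ ^ k := by simp only [norm_mul, norm_pow]

theorem Monic.norm_pow_le_of_eval_eq_zero {f : R[X]} (hf : f.Monic) {r : R} (h : f.eval r = 0) :
    ‖r‖ ^ f.natDegree ≤ ∑ k ∈ range f.natDegree, ‖f.coeff k‖ * ‖r‖ ^ k := by
  simpa [hf.coeff_natDegree] using norm_coeff_mul_norm_pow_le_of_eval_eq_zero le_rfl h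

theorem Monic.norm_pow_le_of_eval_derivative_eq_zero [NormedAlgebra ℝ R] {f : R[X]}
    (hf : f.Monic) (hn : 1 ≤ f.natDegree) {r : R} (h : (derivative f).eval r = 0) :
    ‖r‖ ^ f.natDegree ≤ ∑ k ∈ range f.natDegree, ‖f.coeff k‖ * ‖r‖ ^ k := by
  obtain ⟨m, hm⟩ : ∃ m, f.natDegree = m + 1 := ⟨_, (Nat.sub_add_cancel hn).symm⟩
  have hcoeff (k : ℕ) : ‖(derivative f).coeff k‖ = (k + 1) * ‖f.coeff (k + 1)‖ := by
    rw [coeff_derivative, norm_mul, ← Nat.cast_succ, ← map_natCast (algebraMap ℝ R),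
      norm_algebraMap', Real.norm_natCast, mul_comm]
    push_cast; rfl
  have hdeg : (derivative f).natDegree ≤ m := by
    have := natDegree_derivative_le f
    omega
  have hlead : f.coeff (m + 1) = 1 := hm ▸ hf.coeff_natDegree
  have hderiv := norm_coeff_mul_norm_pow_le_of_eval_eq_zero hdeg h
  simp only [hcoeff, hlead, norm_one, mul_one] at hderiv
  have hshift : ‖r‖ ^ m ≤ ∑ k ∈ range m, ‖f.coeff (k + 1)‖ * ‖r‖ ^ k := by
    refine le_of_mul_le_mul_left (hderiv.trans ?_) (by positivity : (0 : ℝ) < m + 1)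
    rw [mul_sum]
    refine sum_le_sum fun k hk => ?_
    rw [← mul_assoc]
    gcongr
    exact_mod_cast (mem_range.mp hk).le
  rw [hm, sum_range_succ']
  calc ‖r‖ ^ (m + 1) ≤ (∑ k ∈ range m, ‖f.coeff (k + 1)‖ * ‖r‖ ^ k) * ‖r‖ := by
        rw [pow_succ]; gcongr
    _ = ∑ k ∈ range m, ‖f.coeff (k + 1)‖ * ‖r‖ ^ (k + 1) := by
        simp only [sum_mul, pow_succ, mul_assoc]
    _ ≤ _ := le_add_of_nonneg_right (by positivity)

end Polynomial

theorem roots_and_critical_points_bounds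
    (f : Polynomial (Quaternion ℝ)) (hmonic : f.Monic) (hn : 1 ≤ f.natDegree)
    (r : Quaternion ℝ)
    (hr : Polynomial.eval r f = 0 ∨ Polynomial.eval r (derivative f) = 0) :
    ‖r‖ < Real.sqrt (1 + ∑ k ∈ Finset.range f.natDegree, ‖f.coeff k‖ ^ 2) ∧
    ‖r‖ < 1 + (Finset.range f.natDegree).sup'
        (Finset.nonempty_range_iff.mpr (by omega)) (fun k => ‖f.coeff k‖) ∧
    ‖r‖ ≤ max 1 (∑ k ∈ Finset.range f.natDegree, ‖f.coeff k‖) := by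
  have hbound : ‖r‖ ^ f.natDegree ≤ ∑ k ∈ range f.natDegree, ‖f.coeff k‖ * ‖r‖ ^ k :=
    hr.elim hmonic.norm_pow_le_of_eval_eq_zero
      (hmonic.norm_pow_le_of_eval_derivative_eq_zero hn)
  exact ⟨lt_sqrt_one_add_sum_sq_of_pow_le_sum (norm_nonneg r) hbound,
    lt_one_add_of_pow_le_sum (norm_nonneg r) (fun k hk => le_sup' (‖f.coeff ·‖) hk) hbound,
    le_max_one_sum_of_pow_le_sum (norm_nonneg r) (fun k _ => norm_nonneg _) hbound⟩
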